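/- Define, for nonzero ν ∈ ℝⁿ and symmetric M, F(ν, M) = (p−2)⟨Mν,ν⟩/|ν|² + tr(M) where p ∈ ℝ is fixed. Let ν_m → ν ≠ 0 and M_m → M. Then inf over a ∈ 𝕊^{n−1} and c ∈ [0,m] of sup over b ∈ 𝕊^{n−1} and d ∈ [0,m] of [ −tr(A_{a,b} M_m) − (c+d)⟨a+b, ν_m⟩ ] converges to −F(ν, M) as m → ∞, where A_{a,b} = (1/2)(p−2)(a⊗a+b⊗b) + I. -/

import Mathlib

/-!
For the upper bound the minimizing player plays `a = ν̂ := ν / |ν|`, `c = m`. Since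
`⟨ν̂ + b, ν⟩ = |ν| |ν̂ + b|² / 2` for unit `b`, any reply gains at most `O(|ν̂ + b|)` in the
second-order term but loses `m |ν| |ν̂ + b|² / 2` in the first-order one, so the payoff exceeds
`-F(ν, M)` by at most `O(1 / m)`. For the lower bound, against `(a, c)` the maximizer answers
either `b = -a`, `d = 0`, which cancels the first-order term and gives `-F(ν, M) - O(|a - ν̂|)`,
or `b = -ν̂`, `d = m`, which earns `m |ν| |a - ν̂|² / 2`; the better of the two is
`-F(ν, M) - O(m^{-1/2})`. All constants depend continuously on `(ν, M)`, so the estimates pass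
to the limit along `ν_m → ν`, `M_m → M`.
-/

open Matrix Filter Topology Set NormedSpace
open scoped RealInnerProductSpace

noncomputable def infSup {α : Type*} (P : α → Prop) (I : Set ℝ) (Φ : α → ℝ → α → ℝ → ℝ) : ℝ :=
  sInf {v | ∃ a c, P a ∧ c ∈ I ∧ v = sSup {w | ∃ b d, P b ∧ d ∈ I ∧ w = Φ a c b d}}

section InfSup

variable {α β : Type*} {P : α → Prop} {I : Set ℝ} {Φ : α → ℝ → α → ℝ → ℝ} {K : ℝ}

theorem infSup_comp_equiv (e : α ≃ β) (Q : β → Prop) (I : Set ℝ) (Ψ : β → ℝ → β → ℝ → ℝ) :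
    infSup (fun a => Q (e a)) I (fun a c b d => Ψ (e a) c (e b) d) = infSup Q I Ψ := by
  simp only [infSup, e.surjective.exists]

theorem bddAbove_inner_of_abs_le (hΦ : ∀ a c b d, P a → c ∈ I → P b → d ∈ I → |Φ a c b d| ≤ K)
    {a : α} {c : ℝ} (ha : P a) (hc : c ∈ I) :
    BddAbove {w | ∃ b d, P b ∧ d ∈ I ∧ w = Φ a c b d} := by
  refine ⟨K, ?_⟩
  rintro _ ⟨b, d, hb, hd, rfl⟩
  exact (le_abs_self _).trans (hΦ a c b d ha hc hb hd)

theorem infSup_le (hΦ : ∀ a c b d, P a → c ∈ I → P b → d ∈ I → |Φ a c b d| ≤ K)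
    {a : α} {c U : ℝ} (ha : P a) (hc : c ∈ I) (hU : ∀ b d, P b → d ∈ I → Φ a c b d ≤ U) :
    infSup P I Φ ≤ U := by
  unfold infSup
  have hbdd : BddBelow {v | ∃ a c, P a ∧ c ∈ I ∧
      v = sSup {w | ∃ b d, P b ∧ d ∈ I ∧ w = Φ a c b d}} := by
    refine ⟨-K, ?_⟩
    rintro _ ⟨a', c', ha', hc', rfl⟩
    exact (neg_le_of_abs_le (hΦ a' c' a' c' ha' hc' ha' hc')).trans
      (le_csSup (bddAbove_inner_of_abs_le hΦ ha' hc') ⟨a', c', ha', hc', rfl⟩)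
  refine (csInf_le hbdd ⟨a, c, ha, hc, rfl⟩).trans (csSup_le ⟨_, a, c, ha, hc, rfl⟩ ?_)
  rintro _ ⟨b, d, hb, hd, rfl⟩
  exact hU b d hb hd

theorem le_infSup (hΦ : ∀ a c b d, P a → c ∈ I → P b → d ∈ I → |Φ a c b d| ≤ K)
    {ℓ : ℝ} (hP : ∃ a, P a) (hI : I.Nonempty)
    (hℓ : ∀ a c, P a → c ∈ I → ∃ b d, P b ∧ d ∈ I ∧ ℓ ≤ Φ a c b d) :
    ℓ ≤ infSup P I Φ := by
  unfold infSup
  obtain ⟨a₀, ha₀⟩ := hP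
  obtain ⟨c₀, hc₀⟩ := hI
  refine le_csInf ⟨_, a₀, c₀, ha₀, hc₀, rfl⟩ ?_
  rintro _ ⟨a, c, ha, hc, rfl⟩
  obtain ⟨b, d, hb, hd, hℓ⟩ := hℓ a c ha hc
  exact hℓ.trans (le_csSup (bddAbove_inner_of_abs_le hΦ ha hc) ⟨b, d, hb, hd, rfl⟩)

end InfSup

theorem mul_sub_mul_sq_le (C : ℝ) {D : ℝ} (hD : 0 < D) (u : ℝ) :
    C * u - D * u ^ 2 ≤ C ^ 2 / (4 * D) := by
  rw [le_div_iff₀ (by positivity)]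
  nlinarith [sq_nonneg (C - 2 * D * u)]

theorem sub_mul_sqrt_le_max (L B : ℝ) {K D u : ℝ} (hK : 0 ≤ K) (hD : 0 < D) (hu : 0 ≤ u) :
    L - K * √((L + B) / D) ≤ max (L - K * u) (D * u ^ 2 - B) := by
  rcases le_or_gt ((L + B) / D) (u ^ 2) with h | h
  · have : L + B ≤ D * u ^ 2 := by rwa [div_le_iff₀' hD] at h
    exact le_max_of_le_right (by nlinarith [Real.sqrt_nonneg ((L + B) / D)])
  · have : u ≤ √((L + B) / D) := (Real.lt_sqrt hu).2 h |>.le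
    exact le_max_of_le_left (by nlinarith)

section Payoff

variable {E : Type*} [NormedAddCommGroup E] [InnerProductSpace ℝ E]

/-- `T` and `τ` stand for a matrix `M` and its trace; in `payoff`, `⟪x, T x⟫ = tr ((x ⊗ x) M)`,
so that `payoff p τ T w a c b d = -tr (A_{a,b} M) - (c + d) ⟪a + b, w⟫`. -/
noncomputable def normalizedPLaplacian (p τ : ℝ) (T : E →L[ℝ] E) (w : E) : ℝ :=
  (p - 2) * (⟪w, T w⟫ / ‖w‖ ^ 2) + τ

noncomputable def payoff (p τ : ℝ) (T : E →L[ℝ] E) (w x : E) (c : ℝ) (y : E) (d : ℝ) : ℝ :=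
  -((p - 2) / 2 * (⟪x, T x⟫ + ⟪y, T y⟫) + τ) - (c + d) * ⟪x + y, w⟫

variable {p τ : ℝ} {T : E →L[ℝ] E} {w x y : E}

theorem abs_inner_map_self_le (T : E →L[ℝ] E) (hx : ‖x‖ = 1) : |⟪x, T x⟫| ≤ ‖T‖ :=
  (abs_real_inner_le_norm _ _).trans (by simpa [hx] using T.le_opNorm x)

theorem abs_inner_map_self_sub_le (T : E →L[ℝ] E) (hx : ‖x‖ = 1) (hy : ‖y‖ = 1) :
    |⟪x, T x⟫ - ⟪y, T y⟫| ≤ 2 * ‖T‖ * ‖x - y‖ := by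
  have hsplit : ⟪x, T x⟫ - ⟪y, T y⟫ = ⟪x - y, T x⟫ + ⟪y, T (x - y)⟫ := by
    simp only [inner_sub_left, inner_sub_right, map_sub]
    ring
  have hTx : ‖T x‖ ≤ ‖T‖ := by simpa [hx] using T.le_opNorm x
  have hTxy : ‖y‖ * ‖T (x - y)‖ ≤ ‖T‖ * ‖x - y‖ := by simpa [hy] using T.le_opNorm (x - y)
  have h₁ := abs_real_inner_le_norm (x - y) (T x)
  have h₂ := abs_real_inner_le_norm y (T (x - y))
  rw [hsplit]
  nlinarith [abs_add_le ⟪x - y, T x⟫ ⟪y, T (x - y)⟫, norm_nonneg (x - y)]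

theorem inner_normalize_map_normalize (T : E →L[ℝ] E) (w : E) :
    ⟪normalize w, T (normalize w)⟫ = ⟪w, T w⟫ / ‖w‖ ^ 2 := by
  simp only [NormedSpace.normalize, map_smul, real_inner_smul_left, real_inner_smul_right]
  field_simp

theorem inner_normalize_add_eq_half_norm_sq (hw : w ≠ 0) (hy : ‖y‖ = 1) :
    ⟪normalize w + y, w⟫ = ‖w‖ * ‖normalize w + y‖ ^ 2 / 2 := by
  have hn : ‖normalize w‖ = 1 := norm_normalize hw
  calc ⟪normalize w + y, w⟫ = ‖w‖ * ⟪normalize w + y, normalize w⟫ := by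
        rw [← real_inner_smul_right, norm_smul_normalize]
    _ = ‖w‖ * ‖normalize w + y‖ ^ 2 / 2 := by
        rw [norm_add_sq_real, hn, hy, inner_add_left, real_inner_self_eq_norm_sq, hn,
          real_inner_comm]
        ring

theorem abs_trace_term_le (hx : ‖x‖ = 1) (hy : ‖y‖ = 1) :
    |(p - 2) / 2 * (⟪x, T x⟫ + ⟪y, T y⟫) + τ| ≤ |p - 2| * ‖T‖ + |τ| := by
  have h : |(p - 2) / 2 * (⟪x, T x⟫ + ⟪y, T y⟫)| ≤ |p - 2| * ‖T‖ := by
    rw [abs_mul, abs_div, abs_two]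
    have := (abs_add_le _ _).trans
      (add_le_add (abs_inner_map_self_le T hx) (abs_inner_map_self_le T hy))
    nlinarith [abs_nonneg (p - 2)]
  exact (abs_add_le _ _).trans (by linarith)

theorem abs_payoff_le {m c d : ℝ} (hx : ‖x‖ = 1) (hy : ‖y‖ = 1) (hc : c ∈ Icc 0 m)
    (hd : d ∈ Icc 0 m) :
    |payoff p τ T w x c y d| ≤ |p - 2| * ‖T‖ + |τ| + 2 * m * (2 * ‖w‖) := by
  have hxy : |⟪x + y, w⟫| ≤ 2 * ‖w‖ :=
    (abs_real_inner_le_norm _ _).trans (by nlinarith [norm_add_le x y, norm_nonneg w])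
  have hcd : |c + d| ≤ 2 * m := by
    rw [abs_of_nonneg (by linarith [hc.1, hd.1])]
    linarith [hc.2, hd.2]
  have := mul_le_mul hcd hxy (abs_nonneg _) (by linarith [hc.1, hc.2])
  rw [payoff, sub_eq_add_neg, ← neg_add, abs_neg]
  refine (abs_add_le _ _).trans ?_
  rw [abs_mul]
  linarith [abs_trace_term_le (p := p) (τ := τ) (T := T) hx hy]

theorem payoff_normalize_le (hw : w ≠ 0) (hy : ‖y‖ = 1) {m d : ℝ} (hm : 0 < m) (hd : 0 ≤ d) :
    payoff p τ T w (normalize w) m y d ≤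
      -normalizedPLaplacian p τ T w + (p - 2) ^ 2 * ‖T‖ ^ 2 / (2 * (m * ‖w‖)) := by
  set u := ‖normalize w + y‖
  have hn : ‖normalize w‖ = 1 := norm_normalize hw
  have hq : (p - 2) / 2 * (⟪normalize w, T (normalize w)⟫ - ⟪y, T y⟫) ≤ |p - 2| * ‖T‖ * u := by
    have h := abs_inner_map_self_sub_le T hn (y := -y) (by rwa [norm_neg])
    rw [map_neg, inner_neg_neg, sub_neg_eq_add] at h
    have := le_abs_self ((p - 2) / 2 * (⟪normalize w, T (normalize w)⟫ - ⟪y, T y⟫))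
    rw [abs_mul, abs_div, abs_two] at this
    nlinarith [abs_nonneg (p - 2)]
  have hD : 0 < m * ‖w‖ / 2 := by have := norm_pos_iff.2 hw; positivity
  have hamgm := mul_sub_mul_sq_le (|p - 2| * ‖T‖) hD u
  have hd' : 0 ≤ d * (‖w‖ * u ^ 2 / 2) := by positivity
  rw [mul_pow, sq_abs] at hamgm
  rw [payoff, normalizedPLaplacian, ← inner_normalize_map_normalize,
    inner_normalize_add_eq_half_norm_sq hw hy]
  have : (p - 2) ^ 2 * ‖T‖ ^ 2 / (4 * (m * ‖w‖ / 2)) =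
      (p - 2) ^ 2 * ‖T‖ ^ 2 / (2 * (m * ‖w‖)) := by
    ring
  nlinarith

theorem payoff_neg_self (x : E) (c : ℝ) :
    payoff p τ T w x c (-x) 0 = -((p - 2) * ⟪x, T x⟫ + τ) := by
  simp only [payoff, map_neg, inner_neg_neg, add_neg_cancel, inner_zero_left]
  ring

theorem neg_normalizedPLaplacian_sub_le (hw : w ≠ 0) (hx : ‖x‖ = 1) :
    -normalizedPLaplacian p τ T w - 2 * |p - 2| * ‖T‖ * ‖x - normalize w‖ ≤
      -((p - 2) * ⟪x, T x⟫ + τ) := by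
  have h := abs_inner_map_self_sub_le T hx (norm_normalize hw)
  have := le_abs_self ((p - 2) * (⟪x, T x⟫ - ⟪normalize w, T (normalize w)⟫))
  rw [abs_mul] at this
  rw [normalizedPLaplacian, ← inner_normalize_map_normalize]
  nlinarith [abs_nonneg (p - 2)]

theorem le_payoff_neg_normalize (hw : w ≠ 0) (hx : ‖x‖ = 1) {c : ℝ} (hc : 0 ≤ c) (m : ℝ) :
    m * ‖w‖ / 2 * ‖x - normalize w‖ ^ 2 - (|p - 2| * ‖T‖ + |τ|) ≤
      payoff p τ T w x c (-normalize w) m := by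
  have hn : ‖-normalize w‖ = 1 := by rw [norm_neg, norm_normalize hw]
  have hinner : ⟪x + -normalize w, w⟫ = -(‖w‖ * ‖x - normalize w‖ ^ 2 / 2) := by
    calc ⟪x + -normalize w, w⟫ = -⟪normalize w + -x, w⟫ := by
          rw [← inner_neg_left, neg_add, neg_neg, add_comm]
      _ = _ := by
          rw [inner_normalize_add_eq_half_norm_sq hw (by rwa [norm_neg]), ← sub_eq_add_neg,
            norm_sub_rev]
  have hbound := le_abs_self ((p - 2) / 2 * (⟪x, T x⟫ + ⟪-normalize w, T (-normalize w)⟫) + τ)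
  have hc' : 0 ≤ c * (‖w‖ * ‖x - normalize w‖ ^ 2 / 2) := by positivity
  rw [payoff, hinner]
  nlinarith [abs_trace_term_le (p := p) (τ := τ) (T := T) hx hn]

theorem le_max_payoff (hw : w ≠ 0) (hx : ‖x‖ = 1) {c m : ℝ} (hc : 0 ≤ c) (hm : 0 < m) :
    -normalizedPLaplacian p τ T w - 2 * |p - 2| * ‖T‖ *
        √((-normalizedPLaplacian p τ T w + (|p - 2| * ‖T‖ + |τ|)) / (m * ‖w‖ / 2)) ≤
      max (payoff p τ T w x c (-x) 0) (payoff p τ T w x c (-normalize w) m) := by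
  have hD : 0 < m * ‖w‖ / 2 := by have := norm_pos_iff.2 hw; positivity
  refine (sub_mul_sqrt_le_max _ _ (by positivity) hD (norm_nonneg (x - normalize w))).trans
    (max_le_max ?_ ?_)
  · rw [payoff_neg_self]
    exact neg_normalizedPLaplacian_sub_le hw hx
  · exact le_payoff_neg_normalize hw hx hc m

theorem infSup_payoff_le (hw : w ≠ 0) {m : ℝ} (hm : 0 < m) :
    infSup (fun x : E => ‖x‖ = 1) (Icc 0 m) (payoff p τ T w) ≤
      -normalizedPLaplacian p τ T w + (p - 2) ^ 2 * ‖T‖ ^ 2 / (2 * (m * ‖w‖)) :=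
  infSup_le (fun _ _ _ _ hx hc hy hd => abs_payoff_le hx hy hc hd) (norm_normalize hw)
    ⟨hm.le, le_rfl⟩ fun _ _ hy hd => payoff_normalize_le hw hy hm hd.1

theorem le_infSup_payoff (hw : w ≠ 0) {m : ℝ} (hm : 0 < m) :
    -normalizedPLaplacian p τ T w - 2 * |p - 2| * ‖T‖ *
        √((-normalizedPLaplacian p τ T w + (|p - 2| * ‖T‖ + |τ|)) / (m * ‖w‖ / 2)) ≤
      infSup (fun x : E => ‖x‖ = 1) (Icc 0 m) (payoff p τ T w) := by
  refine le_infSup (fun _ _ _ _ hx hc hy hd => abs_payoff_le hx hy hc hd)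
    ⟨normalize w, norm_normalize hw⟩ ⟨0, le_rfl, hm.le⟩ fun x c hx hc => ?_
  rcases le_max_iff.1 (le_max_payoff hw hx hc.1 hm) with h | h
  · exact ⟨-x, 0, by rwa [norm_neg], ⟨le_rfl, hm.le⟩, h⟩
  · exact ⟨-normalize w, m, by rw [norm_neg, norm_normalize hw], ⟨hm.le, le_rfl⟩, h⟩

end Payoff

section Limit

variable {E : Type*} [NormedAddCommGroup E] [InnerProductSpace ℝ E]

theorem tendsto_normalizedPLaplacian {p : ℝ} {τ : ℕ → ℝ} {τ₀ : ℝ} {T : ℕ → E →L[ℝ] E}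
    {T₀ : E →L[ℝ] E} {w : ℕ → E} {w₀ : E} (hτ : Tendsto τ atTop (𝓝 τ₀))
    (hT : Tendsto T atTop (𝓝 T₀)) (hw : Tendsto w atTop (𝓝 w₀)) (hw₀ : w₀ ≠ 0) :
    Tendsto (fun m => normalizedPLaplacian p (τ m) (T m) (w m)) atTop
      (𝓝 (normalizedPLaplacian p τ₀ T₀ w₀)) := by
  have hTw : Tendsto (fun m => T m (w m)) atTop (𝓝 (T₀ w₀)) :=
    (continuous_fst.clm_apply continuous_snd).tendsto (T₀, w₀) |>.comp (hT.prodMk_nhds hw)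
  exact ((hw.inner hTw).div (hw.norm.pow 2) (by positivity)).const_mul (p - 2) |>.add hτ

theorem tendsto_infSup_payoff (p : ℝ) {τ : ℕ → ℝ} {τ₀ : ℝ} {T : ℕ → E →L[ℝ] E}
    {T₀ : E →L[ℝ] E} {w : ℕ → E} {w₀ : E} (hτ : Tendsto τ atTop (𝓝 τ₀))
    (hT : Tendsto T atTop (𝓝 T₀)) (hw : Tendsto w atTop (𝓝 w₀)) (hw₀ : w₀ ≠ 0) :
    Tendsto (fun m : ℕ => infSup (fun x : E => ‖x‖ = 1) (Icc 0 m) (payoff p (τ m) (T m) (w m)))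
      atTop (𝓝 (-normalizedPLaplacian p τ₀ T₀ w₀)) := by
  have hF := (tendsto_normalizedPLaplacian (p := p) hτ hT hw hw₀).neg
  have hD : Tendsto (fun m : ℕ => (m : ℝ) * ‖w m‖) atTop atTop :=
    tendsto_natCast_atTop_atTop.atTop_mul_pos (norm_pos_iff.2 hw₀) hw.norm
  have hupper := hF.add <|
    ((tendsto_const_nhds (x := (p - 2) ^ 2)).mul (hT.norm.pow 2)).div_atTop
      (hD.const_mul_atTop two_pos)
  have hlower := hF.sub <| ((tendsto_const_nhds (x := 2 * |p - 2|)).mul hT.norm).mul <|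
    ((hF.add (((tendsto_const_nhds (x := |p - 2|)).mul hT.norm).add hτ.abs)).div_atTop
      (hD.atTop_div_const two_pos)).sqrt
  rw [add_zero] at hupper
  rw [Real.sqrt_zero, mul_zero, sub_zero] at hlower
  refine tendsto_of_tendsto_of_tendsto_of_le_of_le' hlower hupper ?_ ?_ <;>
    filter_upwards [hw.eventually_ne hw₀, eventually_gt_atTop 0] with m hwm hm
  · exact le_infSup_payoff hwm (Nat.cast_pos.2 hm)
  · exact infSup_payoff_le hwm (Nat.cast_pos.2 hm)

end Limit

section Matrix

variable {ι : Type*} [Fintype ι]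

theorem norm_toLp_eq_one_iff (a : ι → ℝ) : ‖WithLp.toLp 2 a‖ = 1 ↔ a ⬝ᵥ a = 1 := by
  rw [← pow_eq_one_iff_of_nonneg (norm_nonneg _) two_ne_zero, ← real_inner_self_eq_norm_sq,
    EuclideanSpace.inner_toLp_toLp, star_trivial]

theorem trace_vecMulVec_self_mul (a : ι → ℝ) (N : Matrix ι ι ℝ) :
    trace (vecMulVec a a * N) = a ⬝ᵥ N *ᵥ a := by
  rw [vecMulVec_mul, trace_vecMulVec, dotProduct_comm, ← dotProduct_mulVec]

variable [DecidableEq ι]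

theorem payoff_toLp (p : ℝ) (N : Matrix ι ι ℝ) (ν a b : ι → ℝ) (c d : ℝ) :
    payoff p (trace N) (toEuclideanCLM (𝕜 := ℝ) N) (WithLp.toLp 2 ν) (WithLp.toLp 2 a) c
        (WithLp.toLp 2 b) d =
      -trace ((((1 : ℝ) / 2 * (p - 2)) •
          (of fun i j => a i * a j + b i * b j : Matrix ι ι ℝ) + 1) * N) -
        (c + d) * ((a + b) ⬝ᵥ ν) := by
  have hab : (of fun i j => a i * a j + b i * b j : Matrix ι ι ℝ) =
      vecMulVec a a + vecMulVec b b := by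
    ext
    simp [vecMulVec_apply]
  rw [hab, payoff, inner_toEuclideanCLM, inner_toEuclideanCLM, ← WithLp.toLp_add,
    EuclideanSpace.inner_toLp_toLp, star_trivial, dotProduct_comm ν]
  simp only [add_mul, smul_mul, one_mul, trace_add, trace_smul,
    trace_vecMulVec_self_mul, smul_eq_mul]
  ring

theorem normalizedPLaplacian_toLp (p : ℝ) (M : Matrix ι ι ℝ) (ν : ι → ℝ) :
    normalizedPLaplacian p (trace M) (toEuclideanCLM (𝕜 := ℝ) M) (WithLp.toLp 2 ν) =
      (p - 2) * (M *ᵥ ν ⬝ᵥ ν) / (ν ⬝ᵥ ν) + trace M := by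
  rw [normalizedPLaplacian, inner_toEuclideanCLM, ← real_inner_self_eq_norm_sq,
    EuclideanSpace.inner_toLp_toLp, star_trivial, WithLp.ofLp_toLp, dotProduct_comm ν,
    mul_div_assoc]

end Matrix

theorem bellman_isaacs_limit_general {n : ℕ} (p : ℝ)
    (ν : Fin n → ℝ) (hν : ν ≠ 0) (νseq : ℕ → Fin n → ℝ)
    (hνlim : Filter.Tendsto νseq Filter.atTop (nhds ν))
    (M : Matrix (Fin n) (Fin n) ℝ)
    (Mseq : ℕ → Matrix (Fin n) (Fin n) ℝ)
    (hMlim : Filter.Tendsto Mseq Filter.atTop (nhds M)) :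
    Filter.Tendsto
      (fun m : ℕ =>
        sInf { v : ℝ | ∃ (a : Fin n → ℝ) (c : ℝ), a ⬝ᵥ a = 1 ∧ c ∈ Set.Icc (0 : ℝ) m ∧
          v = sSup { w : ℝ | ∃ (b : Fin n → ℝ) (d : ℝ), b ⬝ᵥ b = 1 ∧ d ∈ Set.Icc (0 : ℝ) m ∧
            w = -Matrix.trace
                ((((1 : ℝ) / 2 * (p - 2)) •
                    (Matrix.of (fun i j => a i * a j + b i * b j)
                      : Matrix (Fin n) (Fin n) ℝ) + 1) * Mseq m)
              - (c + d) * ((a + b) ⬝ᵥ νseq m) } })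
      Filter.atTop
      (nhds (-((p - 2) * (M.mulVec ν ⬝ᵥ ν) / (ν ⬝ᵥ ν) + Matrix.trace M))) := by
  have hT : Tendsto (fun m => toEuclideanCLM (𝕜 := ℝ) (Mseq m)) atTop
      (𝓝 (toEuclideanCLM (𝕜 := ℝ) M)) :=
    (LinearMap.continuous_of_finiteDimensional
      (toEuclideanCLM (n := Fin n) (𝕜 := ℝ)).toAlgEquiv.toLinearMap).tendsto M |>.comp hMlim
  have hτ : Tendsto (fun m => trace (Mseq m)) atTop (𝓝 (trace M)) :=
    (continuous_id.matrix_trace.tendsto M).comp hMlim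
  have hw : Tendsto (fun m => WithLp.toLp 2 (νseq m)) atTop (𝓝 (WithLp.toLp 2 ν)) :=
    (PiLp.continuous_toLp 2 _).tendsto ν |>.comp hνlim
  have hlim := tendsto_infSup_payoff p hτ hT hw (by simpa using hν)
  rw [normalizedPLaplacian_toLp] at hlim
  refine hlim.congr fun m => ?_
  rw [← infSup_comp_equiv (WithLp.equiv 2 (Fin n → ℝ)).symm]
  simp only [infSup, WithLp.equiv_symm_apply, norm_toLp_eq_one_iff, payoff_toLp]

/-- Constant-coefficient limit lemma: the Bellman–Isaacs inf-sup operators with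
control bound `m` converge to minus the normalized `p`-Laplacian operator. -/
theorem bellman_isaacs_limit {n : ℕ} (p : ℝ) (hp : 1 < p)
    (ν : Fin n → ℝ) (hν : ν ≠ 0) (νseq : ℕ → Fin n → ℝ) (hνseq : ∀ m, νseq m ≠ 0)
    (hνlim : Filter.Tendsto νseq Filter.atTop (nhds ν))
    (M : Matrix (Fin n) (Fin n) ℝ) (hM : M.IsSymm)
    (Mseq : ℕ → Matrix (Fin n) (Fin n) ℝ) (hMseq : ∀ m, (Mseq m).IsSymm)
    (hMlim : Filter.Tendsto Mseq Filter.atTop (nhds M)) :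
    Filter.Tendsto
      (fun m : ℕ =>
        sInf { v : ℝ | ∃ (a : Fin n → ℝ) (c : ℝ), a ⬝ᵥ a = 1 ∧ c ∈ Set.Icc (0 : ℝ) m ∧
          v = sSup { w : ℝ | ∃ (b : Fin n → ℝ) (d : ℝ), b ⬝ᵥ b = 1 ∧ d ∈ Set.Icc (0 : ℝ) m ∧
            w = -Matrix.trace
                ((((1 : ℝ) / 2 * (p - 2)) •
                    (Matrix.of (fun i j => a i * a j + b i * b j)
                      : Matrix (Fin n) (Fin n) ℝ) + 1) * Mseq m)
              - (c + d) * ((a + b) ⬝ᵥ νseq m) } })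
      Filter.atTop
      (nhds (-((p - 2) * (M.mulVec ν ⬝ᵥ ν) / (ν ⬝ᵥ ν) + Matrix.trace M))) :=
  bellman_isaacs_limit_general p ν hν νseq hνlim M Mseq hMlim
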